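/- If A ∈ ℝ^{n×n} is a symmetric circulant matrix, then Ȟ_c·A·Ȟ_s + Ȟ_s·A·Ȟ_c = 0 and Ȟ_c·A·Ȟ_s − Ȟ_s·A·Ȟ_c = 0 (equivalently, Ȟ_c·A·Ȟ_s = Ȟ_s·A·Ȟ_c = 0). -/

import Mathlib

open Matrix Real

/-- The node-centered cosine matrix `(Ȟ_c)_{j,k} = n^{−1/2}·cos(2jkπ/n)`. -/
noncomputable def Hc (n : ℕ) : Matrix (Fin n) (Fin n) ℝ :=
  fun j k => Real.cos (2 * (j.val : ℝ) * (k.val : ℝ) * Real.pi / n) / Real.sqrt n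

/-- The node-centered sine matrix `(Ȟ_s)_{j,k} = n^{−1/2}·sin(2jkπ/n)`. -/
noncomputable def Hs (n : ℕ) : Matrix (Fin n) (Fin n) ℝ :=
  fun j k => Real.sin (2 * (j.val : ℝ) * (k.val : ℝ) * Real.pi / n) / Real.sqrt n

/-!
The reflection `k ↦ -k` of `ℤ/n` fixes the columns of `Ȟ_c`, negates the rows of `Ȟ_s` and,
applied on both sides, fixes a symmetric circulant `A`. Reindexing the summation in
`Ȟ_c A Ȟ_s` by this reflection therefore shows that the product equals its own negative.
The other product is its transpose.
-/

theorem Fin.dvd_val_neg_add_val {n : ℕ} [NeZero n] (k : Fin n) : n ∣ (-k).val + k.val := by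
  have h := Fin.val_add (-k) k
  rw [neg_add_cancel, Fin.val_zero] at h
  exact Nat.dvd_of_mod_eq_zero h.symm

theorem Real.exists_two_mul_mul_pi_div_eq {n j m m' : ℕ} (hn : n ≠ 0) (h : n ∣ m + m') :
    ∃ p : ℕ, 2 * (j : ℝ) * m * π / n = p * (2 * π) - 2 * (j : ℝ) * m' * π / n := by
  obtain ⟨t, ht⟩ := h
  have hm : (m : ℝ) = n * t - m' := by rw [eq_sub_iff_add_eq]; exact_mod_cast ht
  refine ⟨j * t, ?_⟩
  rw [hm]
  field_simp
  push_cast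
  ring

theorem Real.cos_two_mul_mul_pi_div_eq {n j m m' : ℕ} (hn : n ≠ 0) (h : n ∣ m + m') :
    cos (2 * (j : ℝ) * m * π / n) = cos (2 * (j : ℝ) * m' * π / n) := by
  obtain ⟨p, hp⟩ := exists_two_mul_mul_pi_div_eq (j := j) hn h
  rw [hp, cos_nat_mul_two_pi_sub]

theorem Real.sin_two_mul_mul_pi_div_eq_neg {n j m m' : ℕ} (hn : n ≠ 0) (h : n ∣ m + m') :
    sin (2 * (j : ℝ) * m * π / n) = -sin (2 * (j : ℝ) * m' * π / n) := by
  obtain ⟨p, hp⟩ := exists_two_mul_mul_pi_div_eq (j := j) hn h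
  rw [hp, sin_nat_mul_two_pi_sub]

theorem Hc_transpose (n : ℕ) : (Hc n)ᵀ = Hc n := by
  ext j k
  simp only [transpose_apply, Hc, mul_right_comm _ (j.val : ℝ), mul_assoc 2 (k.val : ℝ)]

theorem Hs_transpose (n : ℕ) : (Hs n)ᵀ = Hs n := by
  ext j k
  simp only [transpose_apply, Hs, mul_right_comm _ (j.val : ℝ), mul_assoc 2 (k.val : ℝ)]

theorem Hc_submatrix_neg (n : ℕ) [NeZero n] : (Hc n).submatrix id (Equiv.neg _) = Hc n := by
  ext j k
  simp only [submatrix_apply, id, Equiv.neg_apply, Hc,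
    cos_two_mul_mul_pi_div_eq (NeZero.ne n) (Fin.dvd_val_neg_add_val k)]

theorem Hs_submatrix_neg (n : ℕ) [NeZero n] : (Hs n).submatrix id (Equiv.neg _) = -Hs n := by
  ext j k
  simp only [submatrix_apply, id, Equiv.neg_apply, Matrix.neg_apply, Hs, neg_div,
    sin_two_mul_mul_pi_div_eq_neg (NeZero.ne n) (Fin.dvd_val_neg_add_val k)]

theorem Hs_submatrix_neg_left (n : ℕ) [NeZero n] : (Hs n).submatrix (Equiv.neg _) id = -Hs n := by
  rw [← transpose_transpose (Hs n), ← transpose_submatrix, Hs_transpose, Hs_submatrix_neg,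
    transpose_neg, Hs_transpose]

theorem Matrix.circulant_submatrix_neg_neg {α n : Type*} [SubtractionCommMonoid n] (v : n → α) :
    (circulant v).submatrix (Equiv.neg n) (Equiv.neg n) = (circulant v)ᵀ := by
  ext i j
  simp only [submatrix_apply, Equiv.neg_apply, circulant_apply, transpose_apply, neg_sub_neg]

theorem Matrix.mul_mul_eq_zero_of_submatrix {l m o R : Type*} [Fintype m] [Ring R]
    [IsAddTorsionFree R] {X : Matrix l m R} {A : Matrix m m R} {Y : Matrix m o R} (σ : m ≃ m)
    (hX : X.submatrix id σ = X) (hA : A.submatrix σ σ = A) (hY : Y.submatrix σ id = -Y) :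
    X * A * Y = 0 := by
  have h : X.submatrix id σ * A.submatrix σ σ * Y.submatrix σ id = X * A * Y := by
    rw [submatrix_mul_equiv, submatrix_mul_equiv, submatrix_id_id]
  rw [hX, hA, hY, Matrix.mul_neg] at h
  ext i j
  exact neg_eq_self.mp (congrFun (congrFun h i) j)

/-- For a symmetric circulant matrix `A` (with `A_{j,k} = a_{(j−k) mod n}` and
`a_{n−i} = a_i`), we have `Ȟ_c·A·Ȟ_s + Ȟ_s·A·Ȟ_c = 0` and
`Ȟ_c·A·Ȟ_s − Ȟ_s·A·Ȟ_c = 0`. -/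
theorem symm_circulant_mixed_zero (n : ℕ) [NeZero n] (a : Fin n → ℝ)
    (A : Matrix (Fin n) (Fin n) ℝ)
    (hA : ∀ j k : Fin n, A j k = a (j - k))
    (ha : ∀ i : Fin n, a (-i) = a i) :
    Hc n * A * Hs n + Hs n * A * Hc n = 0 ∧
    Hc n * A * Hs n - Hs n * A * Hc n = 0 := by
  have hA_circ : A = circulant a := by ext j k; exact hA j k
  have hA_symm : Aᵀ = A := hA_circ ▸ (Fin.circulant_isSymm_iff.mpr ha).eq
  have hcs : Hc n * A * Hs n = 0 := by
    refine mul_mul_eq_zero_of_submatrix (Equiv.neg _) (Hc_submatrix_neg n) ?_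
      (Hs_submatrix_neg_left n)
    rw [hA_circ, circulant_submatrix_neg_neg, ← hA_circ, hA_symm]
  have hsc : Hs n * A * Hc n = 0 := by
    simpa [transpose_mul, Hc_transpose, Hs_transpose, hA_symm, Matrix.mul_assoc]
      using congrArg transpose hcs
  simp [hcs, hsc]
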